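/- arXiv:2401.11516 — 4 statements merged into one kernel-verified Lean document; each statement's English description precedes it below -/
import Mathlib

section
/- Let R be a ring, σ an endomorphism of R, δ a σ-derivation, and let σ' be an endomorphism and δ' an additive map of R. If δ' = aδ + δ_{b,σ'} for elements a, b ∈ R (where δ_{b,σ'}(r) = br − σ'(r)b) and σ'(r)·a = a·σ(r) for all r ∈ R, then δ' is a σ'-derivation of R. -/
/-- If δ' = aδ + δ_{b,σ'} and σ'(r)a = aσ(r) for all r, then δ' is a σ'-derivation. -/
theorem delta'_is_sigma'_derivation {R : Type*} [Ring R] (σ σ' : R →+* R) (δ : R → R)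
    (hadd : ∀ r s : R, δ (r + s) = δ r + δ s)
    (hleib : ∀ r s : R, δ (r * s) = σ r * δ s + δ r * s)
    (a b : R) (hcomp : ∀ r : R, σ' r * a = a * σ r) :
    (∀ r s : R, a * δ (r + s) + (b * (r + s) - σ' (r + s) * b)
      = (a * δ r + (b * r - σ' r * b)) + (a * δ s + (b * s - σ' s * b))) ∧
    (∀ r s : R, a * δ (r * s) + (b * (r * s) - σ' (r * s) * b)
      = σ' r * (a * δ s + (b * s - σ' s * b)) + (a * δ r + (b * r - σ' r * b)) * s) := by
  constructor
  · intro r s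
    rw [hadd, map_add]
    noncomm_ring
  · intro r s
    rw [hleib, map_mul]
    have h1 : σ' r * (a * δ s) = a * (σ r * δ s) := by
      rw [← mul_assoc, hcomp, mul_assoc]
    have h2 : σ' r * (b * s - σ' s * b) = σ' r * b * s - σ' r * σ' s * b := by
      noncomm_ring
    conv_rhs => rw [mul_add, h1, h2]
    noncomm_ring
end

section
/- Let R be a ring, (σ, δ) a quasi-derivation on R with σδ = −δσ, S = R[x; σ, δ], and c ∈ R. Then p(x) = x² + c satisfies p(x)·r = σ'(r)·p(x) + δ'(r) for all r ∈ R, where σ' = σ² and δ'(r) = δ²(r) + c·r − σ²(r)·c. That is, p(x) is a cv-polynomial with respect to the quasi-derivation (σ², δ² + δ_{c,σ²}). -/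
/-- In S = R[x;σ,δ] with σδ = −δσ, the polynomial p = x² + c is a cv-polynomial with
respect to (σ², δ² + δ_{c,σ²}): p·r = σ²(r)·p + (δ²(r) + c r − σ²(r) c) for all r ∈ R. -/
theorem x_sq_plus_c_cv_polynomial {R S : Type*} [Ring R] [Ring S]
    (σ : R →+* R) (δ : R → R)
    (hadd : ∀ r s : R, δ (r + s) = δ r + δ s)
    (hleib : ∀ r s : R, δ (r * s) = σ r * δ s + δ r * s)
    (ι : R →+* S) (X : S)
    (hcomm : ∀ r : R, X * ι r = ι (σ r) * X + ι (δ r))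
    (hanti : ∀ r : R, σ (δ r) = - δ (σ r)) (c : R) :
    ∀ r : R, (X ^ 2 + ι c) * ι r
      = ι (σ (σ r)) * (X ^ 2 + ι c) + ι (δ (δ r) + c * r - σ (σ r) * c) := by
  intro r
  have h2 : X ^ 2 * ι r = ι (σ (σ r)) * X ^ 2 + ι (δ (δ r)) := by
    have : X ^ 2 * ι r = X * (X * ι r) := by noncomm_ring
    rw [this, hcomm, mul_add, ← mul_assoc, hcomm, hcomm, hanti, map_neg]
    noncomm_ring
  have : (X ^ 2 + ι c) * ι r = X ^ 2 * ι r + ι (c * r) := by rw [map_mul]; noncomm_ring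
  rw [this, h2, map_sub, map_add, map_mul, map_mul]
  noncomm_ring
end

section
/- Let D be a division ring with quasi-derivation (σ, δ) and S = D[x; σ, δ]. If p(x) ∈ S satisfies p(x)·a ∈ D·p(x) + D for all a ∈ D, then p(x) is a cv-polynomial: there exists a quasi-derivation (σ', δ') on D (with σ' a ring endomorphism and δ' a σ'-derivation) such that p(x)·a = σ'(a)·p(x) + δ'(a) for all a ∈ D. -/
/-!
Since `p` has degree `n ≥ 1` and the monomials `Xⁱ` are left `D`-independent, a relation
`ι c * p + ι d = 0` forces `c = 0` (compare coefficients of `Xⁿ`) and then `d = 0`. So the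
coefficients `r₁, r₂` in `p * ι r = ι r₁ * p + ι r₂` are unique, and additivity,
multiplicativity and the twisted Leibniz rule follow by computing `p * ι (r + s)` and
`p * ι (r * s)` in two ways.
-/

section CvPolynomial

variable {D S : Type*} [Ring D] [Ring S] (ι : D →+* S) (p : S)

theorem eq_and_eq_of_mul_add_eq_mul_add
    (huniq : ∀ c d : D, ι c * p + ι d = 0 → c = 0 ∧ d = 0) ⦃c₁ c₂ d₁ d₂ : D⦄
    (h : ι c₁ * p + ι d₁ = ι c₂ * p + ι d₂) : c₁ = c₂ ∧ d₁ = d₂ := by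
  have h0 : ι (c₁ - c₂) * p + ι (d₁ - d₂) = 0 := by
    rw [map_sub, map_sub, sub_mul, sub_add_sub_comm, h, sub_self]
  obtain ⟨hc, hd⟩ := huniq _ _ h0
  exact ⟨sub_eq_zero.mp hc, sub_eq_zero.mp hd⟩

theorem exists_quasiDerivation_of_mul_eq_mul_add
    (huniq : ∀ c d : D, ι c * p + ι d = 0 → c = 0 ∧ d = 0)
    (hsemi : ∀ r : D, ∃ r₁ r₂ : D, p * ι r = ι r₁ * p + ι r₂) :
    ∃ (σ' : D →+* D) (δ' : D → D),
      (∀ r s : D, δ' (r + s) = δ' r + δ' s) ∧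
      (∀ r s : D, δ' (r * s) = σ' r * δ' s + δ' r * s) ∧
      ∀ r : D, p * ι r = ι (σ' r) * p + ι (δ' r) := by
  choose σ' δ' spec using hsemi
  have uniq := eq_and_eq_of_mul_add_eq_mul_add ι p huniq
  have h_one : σ' 1 = 1 ∧ δ' 1 = 0 := uniq <| by simp [← spec]
  have h_zero : σ' 0 = 0 ∧ δ' 0 = 0 := uniq <| by simp [← spec]
  have h_add : ∀ r s, σ' (r + s) = σ' r + σ' s ∧ δ' (r + s) = δ' r + δ' s := fun r s =>
    uniq <| by
      rw [← spec, map_add, mul_add, spec, spec, map_add, map_add, add_mul]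
      abel
  have h_mul : ∀ r s, σ' (r * s) = σ' r * σ' s ∧ δ' (r * s) = σ' r * δ' s + δ' r * s :=
    fun r s => uniq <| by
      rw [← spec, map_mul, ← mul_assoc, spec, add_mul, mul_assoc, ← map_mul, spec, mul_add,
        ← mul_assoc, ← map_mul, ← map_mul, map_add, add_assoc]
  exact ⟨⟨⟨⟨σ', h_one.1⟩, fun r s => (h_mul r s).1⟩, h_zero.1, fun r s => (h_add r s).1⟩,
    δ', fun r s => (h_add r s).2, fun r s => (h_mul r s).2, spec⟩

end CvPolynomial

theorem mul_sum_add_eq_sum_range {D S : Type*} [Ring D] [Ring S] (ι : D →+* S) (X : S) (n : ℕ)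
    (a : ℕ → D) (c d : D) :
    ι c * (∑ i ∈ Finset.range (n + 1), ι (a i) * X ^ i) + ι d =
      ∑ i ∈ Finset.range (n + 1), ι (c * a i + if i = 0 then d else 0) * X ^ i := by
  simp [add_mul, Finset.sum_add_distrib, Finset.mul_sum, mul_assoc, apply_ite ι, ite_mul]

theorem eq_zero_and_eq_zero_of_mul_add_eq_zero {D S : Type*} [Ring D] [NoZeroDivisors D]
    [Ring S] (ι : D →+* S) (X : S)
    (hindep : ∀ (c : ℕ → D) (m : ℕ),
      (∑ i ∈ Finset.range m, ι (c i) * X ^ i) = 0 → ∀ i < m, c i = 0)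
    {n : ℕ} (hn : 1 ≤ n) {a : ℕ → D} (han : a n ≠ 0) {c d : D}
    (h : ι c * (∑ i ∈ Finset.range (n + 1), ι (a i) * X ^ i) + ι d = 0) : c = 0 ∧ d = 0 := by
  rw [mul_sum_add_eq_sum_range] at h
  have hcoeff := hindep _ _ h
  have hc : c = 0 := by
    simpa [han, show n ≠ 0 by omega] using hcoeff n (by omega)
  simpa [hc] using hcoeff 0 (by omega)

theorem semi_invariance_gives_cv_polynomial_general {D S : Type*} [DivisionRing D] [Ring S]
    (ι : D →+* S) (X : S)
    (hindep : ∀ (c : ℕ → D) (m : ℕ),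
      (∑ i ∈ Finset.range m, ι (c i) * X ^ i) = 0 → ∀ i < m, c i = 0)
    (n : ℕ) (hn : 1 ≤ n) (a : ℕ → D) (han : a n ≠ 0)
    (p : S) (hp : p = ∑ i ∈ Finset.range (n + 1), ι (a i) * X ^ i)
    (hsemi : ∀ r : D, ∃ r₁ r₂ : D, p * ι r = ι r₁ * p + ι r₂) :
    ∃ (σ' : D →+* D) (δ' : D → D),
      (∀ r s : D, δ' (r + s) = δ' r + δ' s) ∧
      (∀ r s : D, δ' (r * s) = σ' r * δ' s + δ' r * s) ∧
      ∀ r : D, p * ι r = ι (σ' r) * p + ι (δ' r) := by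
  subst hp
  exact exists_quasiDerivation_of_mul_eq_mul_add ι _
    (fun _ _ => eq_zero_and_eq_zero_of_mul_add_eq_zero ι X hindep hn han) hsemi

/-- In S = D[x;σ,δ] over a division ring D (modeled by a ring S with embedding ι and
element X with X·ι(a) = ι(σ a)·X + ι(δ a), where the monomials Xⁱ are left D-independent),
if p has degree n ≥ 1 and p·a ∈ D·p + D for all a ∈ D, then p is a cv-polynomial:
there is a quasi-derivation (σ',δ') on D with p·ι(a) = ι(σ' a)·p + ι(δ' a) for all a. -/
theorem semi_invariance_gives_cv_polynomial {D S : Type*} [DivisionRing D] [Ring S]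
    (σ : D →+* D) (δ : D → D)
    (hadd : ∀ r s : D, δ (r + s) = δ r + δ s)
    (hleib : ∀ r s : D, δ (r * s) = σ r * δ s + δ r * s)
    (ι : D →+* S) (X : S)
    (hcomm : ∀ a : D, X * ι a = ι (σ a) * X + ι (δ a))
    (hindep : ∀ (c : ℕ → D) (m : ℕ),
      (∑ i ∈ Finset.range m, ι (c i) * X ^ i) = 0 → ∀ i < m, c i = 0)
    (n : ℕ) (hn : 1 ≤ n) (a : ℕ → D) (han : a n ≠ 0)
    (p : S) (hp : p = ∑ i ∈ Finset.range (n + 1), ι (a i) * X ^ i)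
    (hsemi : ∀ r : D, ∃ r₁ r₂ : D, p * ι r = ι r₁ * p + ι r₂) :
    ∃ (σ' : D →+* D) (δ' : D → D),
      (∀ r s : D, δ' (r + s) = δ' r + δ' s) ∧
      (∀ r s : D, δ' (r * s) = σ' r * δ' s + δ' r * s) ∧
      ∀ r : D, p * ι r = ι (σ' r) * p + ι (δ' r) :=
  semi_invariance_gives_cv_polynomial_general ι X hindep n hn a han p hp hsemi
end

section
/- Let R be a ring with quasi-derivation (σ, δ), S = R[x; σ, δ], and let σ' be an endomorphism of R. Suppose p(x) = Σ_{i=0}^n aᵢxⁱ ∈ S satisfies, for every r ∈ R and every j with 1 ≤ j ≤ n, the eigenvector identity Σ_{i=j}^{n} aᵢ f_j^i(r) = α(r)·a_j for some function α : R → R (where f_j^i are the coefficient maps with x^i r = Σ_j f_j^i(r)x^j). Then p(x)·r ∈ R·p(x) + R for every r ∈ R. -/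
/-! Expanding `p * r` with `x^i r = Σ_j f_j^i(r) x^j` and collecting powers of `x`, the coefficient
of `x^j` is `Σ_{i ≥ j} a_i f_j^i(r)`. The eigenvector identity turns this into `α(r) a_j` for
every `j ≥ 1`, so `p r` and `α(r) p` differ only in the constant term. -/

open Finset

theorem sum_monomial_mul_eq_sum_Icc_coeff {R S : Type*} [Semiring R] [Semiring S]
    (ι : R →+* S) (X : S) (f : ℕ → ℕ → R → R)
    (hf : ∀ (i : ℕ) (r : R), X ^ i * ι r = ∑ j ∈ range (i + 1), ι (f i j r) * X ^ j)
    (n : ℕ) (a : ℕ → R) (r : R) :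
    (∑ i ∈ range (n + 1), ι (a i) * X ^ i) * ι r =
      ∑ j ∈ range (n + 1), ι (∑ i ∈ Icc j n, a i * f i j r) * X ^ j := by
  have expand_term : ∀ i, ι (a i) * X ^ i * ι r =
      ∑ j ∈ range (i + 1), ι (a i * f i j r) * X ^ j := by
    intro i
    simp only [mul_assoc, hf, mul_sum, map_mul]
  simp only [sum_mul, expand_term, map_sum]
  exact sum_comm' (fun i j => by simp only [mem_range, mem_Icc]; omega)

theorem sum_monomial_eq_mul_add_of_coeff_eq {R S : Type*} [Ring R] [Ring S] (ι : R →+* S)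
    (X : S) (n : ℕ) (a c : ℕ → R) (t : R) (hc : ∀ j, 1 ≤ j → j ≤ n → c j = t * a j) :
    ∑ j ∈ range (n + 1), ι (c j) * X ^ j =
      ι t * ∑ j ∈ range (n + 1), ι (a j) * X ^ j + ι (c 0 - t * a 0) := by
  have tail : ∀ j ∈ range n,
      ι (c (j + 1)) * X ^ (j + 1) = ι t * (ι (a (j + 1)) * X ^ (j + 1)) := by
    intro j hj
    rw [hc (j + 1) (by omega) (mem_range.mp hj), map_mul, mul_assoc]
  rw [sum_range_succ', sum_range_succ', sum_congr rfl tail, ← mul_sum, map_sub, map_mul]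
  simp only [pow_zero, mul_one, mul_add]
  abel

theorem eigenvector_implies_semi_invariance_general {R S : Type*} [Ring R] [Ring S]
    (ι : R →+* S) (X : S)
    (f : ℕ → ℕ → R → R)
    (hf : ∀ (i : ℕ) (r : R),
      X ^ i * ι r = ∑ j ∈ Finset.range (i + 1), ι (f i j r) * X ^ j)
    (n : ℕ) (a : ℕ → R)
    (p : S) (hp : p = ∑ i ∈ Finset.range (n + 1), ι (a i) * X ^ i)
    (α : R → R)
    (heig : ∀ (r : R) (j : ℕ), 1 ≤ j → j ≤ n →
      (∑ i ∈ Finset.Icc j n, a i * f i j r) = α r * a j) :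
    ∀ r : R, ∃ s₁ s₂ : R, p * ι r = ι s₁ * p + ι s₂ := by
  intro r
  subst hp
  rw [sum_monomial_mul_eq_sum_Icc_coeff ι X f hf n a r,
    sum_monomial_eq_mul_add_of_coeff_eq ι X n a _ (α r) (heig r)]
  exact ⟨_, _, rfl⟩

/-- In S = R[x;σ,δ], with coefficient maps f_j^i defined by x^i·r = Σ_j f_j^i(r)·x^j,
if p = Σ_{i=0}^n aᵢxⁱ satisfies the eigenvector identity
Σ_{i=j}^n aᵢ·f_j^i(r) = α(r)·a_j for all r and 1 ≤ j ≤ n (for some α : R → R),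
then p·r ∈ R·p + R for all r ∈ R. -/
theorem eigenvector_implies_semi_invariance {R S : Type*} [Ring R] [Ring S]
    (σ : R →+* R) (δ : R → R)
    (ι : R →+* S) (X : S)
    (hcomm : ∀ r : R, X * ι r = ι (σ r) * X + ι (δ r))
    (f : ℕ → ℕ → R → R)
    (hf : ∀ (i : ℕ) (r : R),
      X ^ i * ι r = ∑ j ∈ Finset.range (i + 1), ι (f i j r) * X ^ j)
    (n : ℕ) (a : ℕ → R)
    (p : S) (hp : p = ∑ i ∈ Finset.range (n + 1), ι (a i) * X ^ i)
    (α : R → R)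
    (heig : ∀ (r : R) (j : ℕ), 1 ≤ j → j ≤ n →
      (∑ i ∈ Finset.Icc j n, a i * f i j r) = α r * a j) :
    ∀ r : R, ∃ s₁ s₂ : R, p * ι r = ι s₁ * p + ι s₂ :=
  eigenvector_implies_semi_invariance_general ι X f hf n a p hp α heig
end
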